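/- For every natural number k ≥ 1, the intertwining identity H_k · C_k = C_k · (H_{k−1} + I) holds, where I is the k×k identity matrix. (This is the finite-dimensional form of the commutation relation [H, c†] = c† for the dimer hopping Hamiltonian and the creation operator c† = (a₂† + a₃†)/√2.) -/
import Mathlib


open Matrix

/-- The dimer hopping matrix `H_k` restricted to the `k`-particle subspace:
a `(k+1) × (k+1)` symmetric tridiagonal matrix with off-diagonal entries
`√((α+1)(k−α))`. -/
noncomputable def hopH (k : ℕ) : Matrix (Fin (k+1)) (Fin (k+1)) ℝ :=
  fun α β =>
    if (α : ℕ) + 1 = (β : ℕ) then Real.sqrt ((((α : ℕ) + 1) * (k - (α : ℕ)) : ℕ))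
    else if (β : ℕ) + 1 = (α : ℕ) then Real.sqrt ((((β : ℕ) + 1) * (k - (β : ℕ)) : ℕ))
    else 0

/-- The `(k+1) × k` creation matrix `C_k` (for `c† = (a₂† + a₃†)/√2`), with entries
`C_k[β,β] = √((k−β)/2)`, `C_k[β+1,β] = √((β+1)/2)`, and `0` otherwise. -/
noncomputable def Cmat (k : ℕ) : Matrix (Fin (k+1)) (Fin k) ℝ :=
  fun α β =>
    if (α : ℕ) = (β : ℕ) then Real.sqrt (((k : ℝ) - (β : ℕ)) / 2)
    else if (α : ℕ) = (β : ℕ) + 1 then Real.sqrt ((((β : ℕ) : ℝ) + 1) / 2)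
    else 0

/-- For every `k ≥ 1` (written here as `k+1`), the intertwining identity
`H_{k+1} · C_{k+1} = C_{k+1} · (H_k + I)` holds: the finite-dimensional form of
the commutation relation `[H, c†] = c†`. -/
noncomputable def hent (n a b : ℕ) : ℝ :=
  if a + 1 = b then Real.sqrt (((a + 1) * (n - a) : ℕ))
  else if b + 1 = a then Real.sqrt (((b + 1) * (n - b) : ℕ))
  else 0

noncomputable def cent (n a b : ℕ) : ℝ :=
  if a = b then Real.sqrt (((n : ℝ) - (b : ℕ)) / 2)
  else if a = b + 1 then Real.sqrt (((b : ℕ) + 1 : ℝ) / 2)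
  else 0

lemma sum_mul_cent (n m b : ℕ) (hb : b + 1 < n) (f : ℕ → ℝ) :
    ∑ γ ∈ Finset.range n, f γ * cent m γ b
      = f b * Real.sqrt (((m : ℝ) - b) / 2) + f (b+1) * Real.sqrt (((b : ℕ) + 1 : ℝ) / 2) := by
  have key : ∀ γ ∈ Finset.range n, f γ * cent m γ b
      = (if γ = b then f γ * Real.sqrt (((m : ℝ) - b) / 2) else 0)
        + (if γ = b + 1 then f γ * Real.sqrt (((b : ℕ) + 1 : ℝ) / 2) else 0) := by
    intro γ _
    unfold cent
    split_ifs <;> first | omega | (subst_vars; ring1)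
  rw [Finset.sum_congr rfl key, Finset.sum_add_distrib, Finset.sum_ite_eq', Finset.sum_ite_eq']
  rw [if_pos (Finset.mem_range.2 (by omega : b < n)), if_pos (Finset.mem_range.2 hb)]

lemma cent_mul_sum (n m a : ℕ) (hn : 0 < n) (ha : a < n + 1) (g : ℕ → ℝ) :
    ∑ γ ∈ Finset.range n, cent m a γ * g γ
      = (if a < n then Real.sqrt (((m : ℝ) - a) / 2) * g a else 0)
        + (if 1 ≤ a then Real.sqrt ((((a-1 : ℕ)) + 1 : ℝ) / 2) * g (a-1) else 0) := by
  have key : ∀ γ ∈ Finset.range n, cent m a γ * g γ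
      = (if γ = a then Real.sqrt (((m : ℝ) - a) / 2) * g γ else 0)
        + (if γ = a - 1 then (if 1 ≤ a then Real.sqrt ((((a-1 : ℕ)) + 1 : ℝ) / 2) * g γ else 0) else 0) := by
    intro γ _
    unfold cent
    split_ifs <;> first | omega | (subst_vars; ring1) | (subst_vars; simp only [Nat.add_sub_cancel]; ring1)
  rw [Finset.sum_congr rfl key, Finset.sum_add_distrib, Finset.sum_ite_eq', Finset.sum_ite_eq']
  simp only [Finset.mem_range]
  rw [if_pos (by omega : a - 1 < n)]

lemma L0 (p q r s : ℝ) (hp : 0 ≤ p) (hr : 0 ≤ r) (h : p * q = r * s) :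
    Real.sqrt p * Real.sqrt q = Real.sqrt r * Real.sqrt s := by
  rw [← Real.sqrt_mul hp, ← Real.sqrt_mul hr, h]

lemma Lsum (x y : ℝ) (hx : 0 ≤ x) (hy : 0 ≤ y) :
    Real.sqrt ((x+1)*(y+1)) * Real.sqrt ((x+1)/2)
      = Real.sqrt ((y+1)/2) + Real.sqrt (x/2) * Real.sqrt (x*(y+1)) := by
  rw [← Real.sqrt_mul (mul_nonneg (by linarith) (by linarith)), ← Real.sqrt_mul (by linarith : (0:ℝ) ≤ x/2)]
  have h1 : (x+1)*(y+1)*((x+1)/2) = (x+1)^2 * ((y+1)/2) := by ring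
  have h2 : x/2*(x*(y+1)) = x^2 * ((y+1)/2) := by ring
  rw [h1, h2, Real.sqrt_mul (by positivity), Real.sqrt_mul (by positivity),
      Real.sqrt_sq (by linarith), Real.sqrt_sq hx]
  ring

theorem hopH_mul_Cmat (k : ℕ) :
    hopH (k+1) * Cmat (k+1) = Cmat (k+1) * (hopH k + 1) := by
  ext α β
  rw [Matrix.mul_apply, Matrix.mul_apply]
  have hl : ∑ γ : Fin (k+2), hopH (k+1) α γ * Cmat (k+1) γ β
      = ∑ γ ∈ Finset.range (k+2), hent (k+1) (α:ℕ) γ * cent (k+1) γ (β:ℕ) :=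
    Fin.sum_univ_eq_sum_range (fun g => hent (k+1) (α:ℕ) g * cent (k+1) g (β:ℕ)) (k+2)
  have hr : ∑ γ : Fin (k+1), Cmat (k+1) α γ * (hopH k + 1) γ β
      = ∑ γ ∈ Finset.range (k+1), cent (k+1) (α:ℕ) γ * (hent k γ (β:ℕ) + if γ = (β:ℕ) then 1 else 0) := by
    have h2 : ∀ γ : Fin (k+1), Cmat (k+1) α γ * (hopH k + 1) γ β
        = (fun g => cent (k+1) (α:ℕ) g * (hent k g (β:ℕ) + if g = (β:ℕ) then 1 else 0)) (γ:ℕ) := by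
      intro γ
      simp only [Matrix.add_apply, Matrix.one_apply, Fin.ext_iff]
      rfl
    calc ∑ γ : Fin (k+1), Cmat (k+1) α γ * (hopH k + 1) γ β
        = ∑ γ : Fin (k+1), (fun g => cent (k+1) (α:ℕ) g * (hent k g (β:ℕ) + if g = (β:ℕ) then 1 else 0)) (γ:ℕ) :=
          Finset.sum_congr rfl (fun γ _ => h2 γ)
      _ = _ := Fin.sum_univ_eq_sum_range (fun g => cent (k+1) (α:ℕ) g * (hent k g (β:ℕ) + if g = (β:ℕ) then 1 else 0)) (k+1)
  rw [hl, hr, sum_mul_cent (k+2) (k+1) (β:ℕ) (by omega) _,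
      cent_mul_sum (k+1) (k+1) (α:ℕ) (by omega) α.isLt _]
  have hα : (α:ℕ) < k + 2 := α.isLt
  have hβ : (β:ℕ) < k + 1 := β.isLt
  set a := (α:ℕ) with hadef
  set b := (β:ℕ) with hbdef
  clear_value a b
  clear hl hr hadef hbdef α β
  unfold hent
  split_ifs <;> try omega
  all_goals simp only [zero_mul, mul_zero, zero_add, add_zero, mul_one]
  -- G1: a+1=b, 1 <= a
  · have hb : b = a + 1 := by omega
    obtain ⟨c, rfl⟩ : ∃ c, k = a + c + 1 := ⟨k - a - 1, by omega⟩
    subst hb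
    rw [show a + c + 1 + 1 - a = c + 2 by omega, show a + c + 1 - a = c + 1 by omega]
    exact L0 _ _ _ _ (by positivity)
      (by push_cast; have h0 : (0:ℝ) ≤ (c:ℝ) := Nat.cast_nonneg c; linarith)
      (by push_cast; ring)
  -- G2: a+1=b, a=0
  · have hb : b = a + 1 := by omega
    obtain ⟨c, rfl⟩ : ∃ c, k = a + c + 1 := ⟨k - a - 1, by omega⟩
    subst hb
    rw [show a + c + 1 + 1 - a = c + 2 by omega, show a + c + 1 - a = c + 1 by omega]
    exact L0 _ _ _ _ (by positivity)
      (by push_cast; have h0 : (0:ℝ) ≤ (c:ℝ) := Nat.cast_nonneg c; linarith)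
      (by push_cast; ring)
  -- G3: b+1=a, a<k+1
  · have ha : a = b + 1 := by omega
    obtain ⟨e, rfl⟩ : ∃ e, k = b + e + 1 := ⟨k - b - 1, by omega⟩
    subst ha
    rw [show b + e + 1 + 1 - b = e + 2 by omega, show b + e + 1 - b = e + 1 by omega,
        show b + 1 - 1 = b by omega]
    have key := Lsum ((e:ℝ)+1) (b:ℝ) (by positivity) (by positivity)
    push_cast
    ring_nf at key ⊢
    linarith [key]
  -- G4: b+1=a, a=k+1
  · have ha : a = b + 1 := by omega
    have hk : k = b := by omega
    subst ha
    subst hk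
    rw [show k + 1 - k = 1 by omega, show k + 1 - 1 = k by omega,
        ← Real.sqrt_mul (by positivity)]
    congr 1
    push_cast
    ring
  -- G5: a=b, 1<=a
  · have ha : a = b := by omega
    subst ha
    obtain ⟨d, rfl⟩ : ∃ d, a = d + 1 := ⟨a - 1, by omega⟩
    obtain ⟨e, rfl⟩ : ∃ e, k = d + 1 + e := ⟨k - d - 1, by omega⟩
    rw [show d + 1 + e + 1 - (d + 1) = e + 1 by omega, show d + 1 - 1 = d by omega,
        show d + 1 + e - d = e + 1 by omega]
    have key := Lsum ((d:ℝ)+1) (e:ℝ) (by positivity) (by positivity)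
    push_cast
    ring_nf at key ⊢
    linarith [key]
  -- G6: a=b=0
  · have ha : a = 0 := by omega
    have hb : b = 0 := by omega
    subst ha hb
    rw [← Real.sqrt_mul (by positivity)]
    congr 1
    rw [show (0+1)*(k+1-0) = k + 1 by omega]
    push_cast
    ring
  -- G7: a=b+2, a<k+1
  · have ha : a = b + 2 := by omega
    subst ha
    rw [show b + 2 - 1 = b + 1 by omega, show k + 1 - (b + 1) = k - b by omega]
    exact L0 _ _ _ _ (by positivity) (by positivity) (by push_cast; ring)
  -- G8: a=b+2, a=k+1
  · have ha : a = b + 2 := by omega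
    subst ha
    rw [show b + 2 - 1 = b + 1 by omega, show k + 1 - (b + 1) = k - b by omega]
    exact L0 _ _ _ _ (by positivity) (by positivity) (by push_cast; ring)
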